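/- Let g be an R-module automorphism of V satisfying ω(g u, g v) = ω(u, v) for all u, v ∈ V. Then there exists a function α : V → R satisfying α(v₁ + v₂) − α(v₁) − α(v₂) = β(g v₁, g v₂) − β(v₁, v₂) for all v₁, v₂ ∈ V. (This says that the affine symplectic group ASp(V) surjects onto the symplectic group Sp(V), i.e. the sequence 0 → V^∨ → ASp(V) → Sp(V) → 1 is exact on the right; it contrasts with Weil's pseudo-symplectic group, which surjects only onto an orthogonal subgroup.) -/

import Mathlib

/-!
The defect `B(u, v) = β(g u, g v) - β(u, v)` is symmetric because `g` preserves `ω`.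
Lifting `g` to the free module `Ṽ`, the pullback of `B` to `Ṽ` is the `R`-bilinear form
`2 (β̃(g̃ ·, g̃ ·) - β̃)`, whose diagonal is even. On a basis, splitting `B` into a triangular
form `C` with half of `B`'s diagonal gives `C + Cᵀ = B`, so `Q x = C x x` has polar form `B`.
As `2 B = 0`, also `Q (2 z) = 0`, so `Q` is constant on cosets of `2Ṽ` and descends to the
required `α`.
-/

/-- The Galois ring `R = (ℤ/4ℤ)[X]/(f)`. -/
abbrev GR (f : Polynomial (ZMod 4)) : Type :=
  Polynomial (ZMod 4) ⧸ Ideal.span {f}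

/-- The free symplectic module `Ṽ = R^n × R^n`. -/
abbrev Vt (f : Polynomial (ZMod 4)) (n : ℕ) : Type :=
  (Fin n → GR f) × (Fin n → GR f)

/-- The bilinear form `β̃((l,m),(l',m')) = ∑ lᵢ·m'ᵢ` on `Ṽ`. -/
noncomputable def betaT (f : Polynomial (ZMod 4)) (n : ℕ) (u v : Vt f n) : GR f :=
  ∑ i, u.1 i * v.2 i

/-- The submodule `2Ṽ ⊆ Ṽ`. -/
noncomputable def twoSub (f : Polynomial (ZMod 4)) (n : ℕ) : Submodule (GR f) (Vt f n) :=
  LinearMap.range (LinearMap.lsmul (GR f) (Vt f n) (2 : GR f))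

/-- The quotient `V = Ṽ/2Ṽ`. -/
abbrev VQ (f : Polynomial (ZMod 4)) (n : ℕ) : Type :=
  Vt f n ⧸ twoSub f n

open Module
open LinearMap (BilinMap)

section QuadraticRefinement

variable {R M N : Type*} [CommRing R] [AddCommGroup M] [Module R M] [AddCommGroup N] [Module R N]

theorem LinearMap.BilinMap.exists_polar_eq {ι : Type*} (bm : Basis ι R M) (B : BilinMap R M N)
    (hsymm : ∀ i j, B (bm i) (bm j) = B (bm j) (bm i))
    (hdiag : ∀ i, ∃ a : N, B (bm i) (bm i) = (2 : R) • a) :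
    ∃ Q : QuadraticMap R M N, ∀ x y, QuadraticMap.polar Q x y = B x y := by
  let : LinearOrder ι := IsWellOrder.linearOrder WellOrderingRel
  choose a ha using hdiag
  let C : BilinMap R M N := bm.constr (S := R) fun i => bm.constr (S := R) fun j =>
    if i = j then a i else if i < j then B (bm i) (bm j) else 0
  have hC : ∀ i j, C (bm i) (bm j) =
      if i = j then a i else if i < j then B (bm i) (bm j) else 0 := by
    simp [C]
  have hCB : C + C.flip = B := bm.ext fun i => bm.ext fun j => by
    simp only [LinearMap.add_apply, LinearMap.flip_apply, hC]
    obtain h | rfl | h := lt_trichotomy i j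
    · simp [h.ne, h, h.ne', h.not_gt]
    · simp [ha, two_smul]
    · simp [h.ne, h, h.ne', h.not_gt, hsymm i j]
  refine ⟨C.toQuadraticMap, fun x y => ?_⟩
  rw [LinearMap.BilinMap.polar_toQuadraticMap, ← hCB]
  rfl

theorem QuadraticMap.map_add_two_smul (Q : QuadraticMap R M N)
    (hpolar : ∀ x y, (2 : R) • QuadraticMap.polar Q x y = 0) (x z : M) :
    Q (x + (2 : R) • z) = Q x := by
  have hQ2 : Q ((2 : R) • z) = 0 := by
    rw [Q.map_smul, mul_smul, ← hpolar z z, QuadraticMap.polar_self, two_nsmul, ← two_smul R]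
  calc Q (x + (2 : R) • z)
        = QuadraticMap.polar Q x ((2 : R) • z) + Q x + Q ((2 : R) • z) := by
          rw [QuadraticMap.polar]; abel
    _ = Q x := by rw [QuadraticMap.polar_smul_right, hpolar, hQ2, zero_add, add_zero]

theorem QuadraticMap.exists_comp_mkQ_of_two_smul_polar_eq_zero (Q : QuadraticMap R M N)
    (hpolar : ∀ x y, (2 : R) • QuadraticMap.polar Q x y = 0) :
    ∃ α : M ⧸ LinearMap.range (LinearMap.lsmul R M (2 : R)) → N,
      ∀ x, α (Submodule.Quotient.mk x) = Q x := by
  refine ⟨Quotient.lift Q fun x y hxy => ?_, fun x => rfl⟩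
  obtain ⟨z, hz⟩ := (Submodule.quotientRel_def _).mp hxy
  rw [LinearMap.lsmul_apply] at hz
  rw [← Q.map_add_two_smul hpolar y z, hz, add_sub_cancel]

end QuadraticRefinement

theorem natCast_eq_zero_of_zmod_algebra {A : Type*} [Semiring A] (n : ℕ) [Algebra (ZMod n) A] :
    (n : A) = 0 := by
  rw [← map_natCast (algebraMap (ZMod n) A), ZMod.natCast_self, map_zero]

theorem exists_bilinForm_two_mul_eq_defect (f : Polynomial (ZMod 4)) (n : ℕ)
    (β : VQ f n → VQ f n → GR f)
    (hβ : ∀ u v : Vt f n,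
      β (Submodule.Quotient.mk u) (Submodule.Quotient.mk v) = 2 * betaT f n u v)
    (g : VQ f n ≃ₗ[GR f] VQ f n) :
    ∃ D : LinearMap.BilinForm (GR f) (Vt f n), ∀ x y,
      2 * D x y = β (g (Submodule.Quotient.mk x)) (g (Submodule.Quotient.mk y)) -
        β (Submodule.Quotient.mk x) (Submodule.Quotient.mk y) := by
  obtain ⟨gt, hgt⟩ := Module.projective_lifting_property (twoSub f n).mkQ
    (g.toLinearMap ∘ₗ (twoSub f n).mkQ) (Submodule.mkQ_surjective _)
  have hlift : ∀ x, g (Submodule.Quotient.mk x) = Submodule.Quotient.mk (gt x) :=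
    fun x => (LinearMap.congr_fun hgt x).symm
  let b := (dotProductBilin (GR f) (GR f) : LinearMap.BilinForm (GR f) (Fin n → GR f)).compl₁₂
    (LinearMap.fst (GR f) (Fin n → GR f) (Fin n → GR f))
    (LinearMap.snd (GR f) (Fin n → GR f) (Fin n → GR f))
  refine ⟨b.compl₁₂ gt gt - b, fun x y => ?_⟩
  rw [hlift, hlift, hβ, hβ, ← mul_sub]
  rfl

/-- For every `R`-module automorphism `g` of `V` preserving the symplectic
form `ω`, there exists `α : V → R` with
`α(v₁+v₂) - α(v₁) - α(v₂) = β(g v₁, g v₂) - β(v₁, v₂)`:  the affine symplectic group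
`ASp(V)` surjects onto `Sp(V)`. -/
theorem stmt_18
    (f : Polynomial (ZMod 4))
    (n : ℕ)
    (β : VQ f n → VQ f n → GR f)
    (hβ : ∀ u v : Vt f n,
      β (Submodule.Quotient.mk u) (Submodule.Quotient.mk v) = 2 * betaT f n u v)
    (g : VQ f n ≃ₗ[GR f] VQ f n)
    (hg : ∀ u v : VQ f n, β (g u) (g v) - β (g v) (g u) = β u v - β v u) :
    ∃ α : VQ f n → GR f, ∀ v₁ v₂ : VQ f n,
      α (v₁ + v₂) - α v₁ - α v₂ = β (g v₁) (g v₂) - β v₁ v₂ := by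
  obtain ⟨D, hD⟩ := exists_bilinForm_two_mul_eq_defect f n β hβ g
  set B := (2 : GR f) • D
  obtain ⟨Q, hQ⟩ :=
    LinearMap.BilinMap.exists_polar_eq (Module.Free.chooseBasis (GR f) (Vt f n)) B
      (fun i j => by
        simp only [B, LinearMap.smul_apply, smul_eq_mul, hD]
        linear_combination hg (Submodule.Quotient.mk _) (Submodule.Quotient.mk _))
      (fun i => ⟨_, rfl⟩)
  have h4 : (2 : GR f) * 2 = 0 :=
    calc (2 : GR f) * 2 = ((4 : ℕ) : GR f) := by norm_num
      _ = 0 := natCast_eq_zero_of_zmod_algebra 4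
  obtain ⟨α, hα⟩ : ∃ α : VQ f n → GR f, ∀ x, α (Submodule.Quotient.mk x) = Q x :=
    Q.exists_comp_mkQ_of_two_smul_polar_eq_zero fun x y => by
      rw [hQ, LinearMap.smul_apply, LinearMap.smul_apply, smul_eq_mul, smul_eq_mul, ← mul_assoc,
        h4, zero_mul]
  refine ⟨α, fun v₁ v₂ => ?_⟩
  obtain ⟨x, rfl⟩ := Submodule.Quotient.mk_surjective _ v₁
  obtain ⟨y, rfl⟩ := Submodule.Quotient.mk_surjective _ v₂
  rw [← Submodule.Quotient.mk_add, hα, hα, hα, ← hD]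
  exact hQ x y
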